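/- arXiv:2511.13554 — 3 statements merged into one kernel-verified Lean document; each statement's English description precedes it below -/
import Mathlib

section
/- Let ξ ~ Normal(0,1), Y = ξ², X = μ + μ²Y/(2λ) − (μ/(2λ))·sqrt(4μλY + μ²Y²), η ~ Uniform(0,1) independent of ξ, and define IG = X if η ≤ μ/(μ+X) and IG = μ²/X otherwise. Then IG has the Inverse Gaussian distribution with parameters (μ, λ). -/
open MeasureTheory ProbabilityTheory

/-- The density of the Inverse Gaussian distribution `IG(m, l)` on `(0,∞)`. -/
noncomputable def invGaussianDensity (m l x : ℝ) : ℝ :=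
  Real.sqrt (l / (2 * Real.pi * x ^ 3)) * Real.exp (-l * (x - m) ^ 2 / (2 * m ^ 2 * x))

/-- The Inverse Gaussian distribution `IG(m, l)` as a measure on `ℝ`. -/
noncomputable def invGaussianMeasure (m l : ℝ) : Measure ℝ :=
  (volume.restrict (Set.Ioi (0 : ℝ))).withDensity
    (fun x => ENNReal.ofReal (invGaussianDensity m l x))

/-! With `ψ(x) = √λ (μ - x) / (μ √x)`, a decreasing bijection of `(0, μ)` onto `(0, ∞)`, the
quadratic defining `X` says `ψ(X)² = ξ²`, i.e. `X = ψ⁻¹ |ξ|`. Changing variables in the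
half-normal density shows that `X` has density `(1 + x/μ) f(x)` on `(0, μ)`, where `f` is the
inverse Gaussian density. Keeping `X` with probability `μ / (μ + X)` contributes `f(x)` on
`(0, μ)`; reflecting to `μ² / X` contributes `(x/μ) f(x)` at `μ² / x`, and since
`f(μ² / x) = (x/μ)³ f(x)` the Jacobian `μ² / x²` turns this into `f` on `(μ, ∞)`. -/

open Set Real
open scoped ENNReal

namespace MichaelSchucanyHaas

/-- The smaller root `x` of `λ (x - μ)² = μ² s² x`; the sampler's `X` is `igRoot m l ξ`. -/
noncomputable def igRoot (m l s : ℝ) : ℝ :=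
  m + m ^ 2 * s ^ 2 / (2 * l) - m / (2 * l) * √(4 * m * l * s ^ 2 + m ^ 2 * (s ^ 2) ^ 2)

/-- The inverse of `igRoot` on `(0, μ)`; its square is the statistic `λ (x - μ)² / (μ² x)`. -/
noncomputable def igScore (m l x : ℝ) : ℝ := √l * (m - x) / (m * √x)

variable {m l : ℝ}

lemma igRoot_neg (s : ℝ) : igRoot m l (-s) = igRoot m l s := by simp [igRoot]

lemma continuous_igRoot : Continuous (igRoot m l) := by
  unfold igRoot; fun_prop

lemma igRoot_quadratic (hm : 0 < m) (hl : 0 < l) (s : ℝ) :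
    l * (igRoot m l s - m) ^ 2 = m ^ 2 * s ^ 2 * igRoot m l s := by
  have hD := Real.sq_sqrt (by positivity : 0 ≤ 4 * m * l * s ^ 2 + m ^ 2 * (s ^ 2) ^ 2)
  unfold igRoot
  generalize √(4 * m * l * s ^ 2 + m ^ 2 * (s ^ 2) ^ 2) = D at hD ⊢
  field_simp
  linear_combination hD

lemma igRoot_eq_sub (hl : 0 < l) (s : ℝ) :
    igRoot m l s = m - m / (2 * l) * (√(4 * m * l * s ^ 2 + m ^ 2 * (s ^ 2) ^ 2) - m * s ^ 2) := by
  unfold igRoot; field_simp; ring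

lemma igRoot_pos (hm : 0 < m) (hl : 0 < l) (s : ℝ) : 0 < igRoot m l s := by
  have hD : √(4 * m * l * s ^ 2 + m ^ 2 * (s ^ 2) ^ 2) - m * s ^ 2 < 2 * l := by
    rw [sub_lt_iff_lt_add, Real.sqrt_lt' (by positivity)]
    nlinarith [sq_nonneg s]
  have h := mul_lt_mul_of_pos_left hD (by positivity : 0 < m / (2 * l))
  rw [div_mul_cancel₀ _ (by positivity)] at h
  linarith [igRoot_eq_sub (m := m) hl s]

lemma igRoot_le (hm : 0 < m) (hl : 0 < l) (s : ℝ) : igRoot m l s ≤ m := by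
  have hD : m * s ^ 2 ≤ √(4 * m * l * s ^ 2 + m ^ 2 * (s ^ 2) ^ 2) :=
    Real.le_sqrt_of_sq_le (by nlinarith [mul_nonneg (mul_pos hm hl).le (sq_nonneg s)])
  rw [igRoot_eq_sub hl, sub_le_self_iff]
  exact mul_nonneg (by positivity) (sub_nonneg.mpr hD)

lemma igRoot_lt (hm : 0 < m) (hl : 0 < l) {s : ℝ} (hs : s ≠ 0) : igRoot m l s < m := by
  have hD : m * s ^ 2 < √(4 * m * l * s ^ 2 + m ^ 2 * (s ^ 2) ^ 2) := by
    rw [Real.lt_sqrt (by positivity)]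
    nlinarith [mul_pos (mul_pos hm hl) (pow_pos (sq_pos_of_ne_zero hs) 1)]
  rw [igRoot_eq_sub hl, sub_lt_self_iff]
  exact mul_pos (by positivity) (sub_pos.mpr hD)

lemma igScore_sq (hl : 0 ≤ l) {x : ℝ} (hx : 0 ≤ x) :
    igScore m l x ^ 2 = l * (m - x) ^ 2 / (m ^ 2 * x) := by
  rw [igScore, div_pow, mul_pow, mul_pow, Real.sq_sqrt hl, Real.sq_sqrt hx]

lemma igScore_nonneg {x : ℝ} (hm : 0 < m) (hxm : x ≤ m) : 0 ≤ igScore m l x := by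
  unfold igScore
  have : 0 ≤ m - x := by linarith
  positivity

lemma igScore_pos (hm : 0 < m) (hl : 0 < l) {x : ℝ} (hx : x ∈ Ioo 0 m) :
    0 < igScore m l x := by
  have hx0 : 0 < x := hx.1
  have hmx : 0 < m - x := by linarith [hx.2]
  unfold igScore
  positivity

lemma igScore_igRoot (hm : 0 < m) (hl : 0 < l) {s : ℝ} (hs : 0 ≤ s) :
    igScore m l (igRoot m l s) = s := by
  have hpos := igRoot_pos hm hl s
  have hsq : igScore m l (igRoot m l s) ^ 2 = s ^ 2 := by
    rw [igScore_sq hl.le hpos.le, div_eq_iff (by positivity)]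
    linear_combination igRoot_quadratic hm hl s
  exact (pow_left_inj₀ (igScore_nonneg hm (igRoot_le hm hl s)) hs two_ne_zero).mp hsq

/-- Both `x` and `igRoot (igScore x)` solve the quadratic with `s = igScore x`, and two distinct
roots sum to at least `2μ`. -/
lemma igRoot_igScore (hm : 0 < m) (hl : 0 < l) {x : ℝ} (hx : x ∈ Ioo 0 m) :
    igRoot m l (igScore m l x) = x := by
  set s := igScore m l x
  set r := igRoot m l s
  have hr : l * (r - m) ^ 2 = m ^ 2 * s ^ 2 * r := igRoot_quadratic hm hl s
  have hx' : l * (x - m) ^ 2 = m ^ 2 * s ^ 2 * x := by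
    rw [igScore_sq hl.le hx.1.le]; field_simp [hx.1.ne']; ring
  have hprod : (r - x) * (l * (r + x - 2 * m) - m ^ 2 * s ^ 2) = 0 := by
    linear_combination hr - hx'
  rcases mul_eq_zero.mp hprod with h | h
  · linarith
  · nlinarith [igRoot_le hm hl s, hx.2, sq_nonneg s]

lemma igScore_image (hm : 0 < m) (hl : 0 < l) : igScore m l '' Ioo 0 m = Ioi 0 := by
  refine Subset.antisymm (image_subset_iff.mpr fun x hx => igScore_pos hm hl hx) fun s hs => ?_
  exact ⟨igRoot m l s, ⟨igRoot_pos hm hl s, igRoot_lt hm hl (ne_of_gt hs)⟩,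
    igScore_igRoot hm hl (le_of_lt hs)⟩

lemma injOn_igScore (hm : 0 < m) (hl : 0 < l) : InjOn (igScore m l) (Ioo 0 m) :=
  fun x hx y hy h => by rw [← igRoot_igScore hm hl hx, h, igRoot_igScore hm hl hy]

lemma hasDerivAt_igScore (hm : 0 < m) {x : ℝ} (hx : 0 < x) :
    HasDerivAt (igScore m l) (-(√l * (m + x) / (2 * m * x * √x))) x := by
  have hsx : 0 < √x := Real.sqrt_pos.mpr hx
  have hnum : HasDerivAt (fun y => √l * (m - y)) (-√l) x := by
    simpa using ((hasDerivAt_id x).const_sub m).const_mul √l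
  refine (hnum.div ((Real.hasDerivAt_sqrt hx.ne').const_mul m) (by positivity)).congr_deriv ?_
  obtain ⟨u, hu0, rfl⟩ : ∃ u, 0 < u ∧ x = u ^ 2 := ⟨√x, hsx, (Real.sq_sqrt hx.le).symm⟩
  rw [Real.sqrt_sq hu0.le]
  field_simp
  ring

@[fun_prop]
lemma measurable_invGaussianDensity (m l : ℝ) : Measurable (invGaussianDensity m l) := by
  unfold invGaussianDensity; fun_prop

lemma invGaussianDensity_nonneg (m l x : ℝ) : 0 ≤ invGaussianDensity m l x :=
  mul_nonneg (Real.sqrt_nonneg _) (Real.exp_pos _).le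

lemma invGaussianDensity_sq_div (hm : 0 < m) {x : ℝ} (hx : 0 < x) :
    invGaussianDensity m l (m ^ 2 / x) = (x / m) ^ 3 * invGaussianDensity m l x := by
  have hsqrt : l / (2 * π * (m ^ 2 / x) ^ 3) = l / (2 * π * x ^ 3) * ((x / m) ^ 3) ^ 2 := by
    field_simp
  have hexp : -l * (m ^ 2 / x - m) ^ 2 / (2 * m ^ 2 * (m ^ 2 / x))
      = -l * (x - m) ^ 2 / (2 * m ^ 2 * x) := by
    field_simp; ring
  rw [invGaussianDensity, invGaussianDensity, hsqrt, hexp,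
    Real.sqrt_mul' _ (by positivity), Real.sqrt_sq (by positivity)]
  ring

lemma two_mul_abs_deriv_mul_gaussianPDFReal_igScore (hm : 0 < m) (hl : 0 < l) {x : ℝ}
    (hx : 0 < x) :
    2 * (√l * (m + x) / (2 * m * x * √x) * gaussianPDFReal 0 1 (igScore m l x))
      = (1 + x / m) * invGaussianDensity m l x := by
  have hexp : -igScore m l x ^ 2 / 2 = -l * (x - m) ^ 2 / (2 * m ^ 2 * x) := by
    rw [igScore_sq hl.le hx.le]; field_simp; ring
  have hsqrt : √(l / (2 * π * x ^ 3)) = √l / (√(2 * π) * (x * √x)) := by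
    rw [Real.sqrt_div' _ (by positivity), Real.sqrt_mul' _ (by positivity),
      show x ^ 3 = x ^ 2 * x by ring, Real.sqrt_mul' _ hx.le, Real.sqrt_sq hx.le]
  simp only [gaussianPDFReal, NNReal.coe_one, mul_one, sub_zero]
  rw [hexp, invGaussianDensity, hsqrt]
  have : 0 < √x := Real.sqrt_pos.mpr hx
  field_simp

lemma lintegral_eq_two_mul_setLIntegral_Ioi_of_even {g : ℝ → ℝ≥0∞} (hg : ∀ x, g (-x) = g x) :
    ∫⁻ x, g x = 2 * ∫⁻ x in Ioi 0, g x := by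
  have hneg : ∫⁻ x in Iic 0, g x = ∫⁻ x in Ioi 0, g x := by
    rw [← Measure.restrict_congr_set Iio_ae_eq_Iic, ← neg_zero, ← image_neg_Ioi,
      lintegral_image_eq_lintegral_abs_deriv_mul measurableSet_Ioi
        (fun x _ => (hasDerivAt_neg x).hasDerivWithinAt) neg_injective.injOn]
    simp [hg]
  rw [← lintegral_add_compl g measurableSet_Ioi, compl_Ioi, hneg, two_mul]

lemma map_ite_le_restrict_Icc {c : ℝ} (hc0 : 0 ≤ c) (hc1 : c ≤ 1) {α : Type*}
    [MeasurableSpace α] (a b : α) :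
    (volume.restrict (Icc (0 : ℝ) 1)).map (fun t => if t ≤ c then a else b)
      = ENNReal.ofReal c • Measure.dirac a + ENNReal.ofReal (1 - c) • Measure.dirac b := by
  have hsplit : volume.restrict (Icc (0 : ℝ) 1)
      = volume.restrict (Icc 0 c) + volume.restrict (Ioc c 1) := by
    rw [← Icc_union_Ioc_eq_Icc hc0 hc1, Measure.restrict_union
      ((Iic_disjoint_Ioc le_rfl).mono_left Icc_subset_Iic_self) measurableSet_Ioc]
  have hleft : (volume.restrict (Icc 0 c)).map (fun t => if t ≤ c then a else b)
      = (volume.restrict (Icc 0 c)).map (fun _ => a) :=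
    Measure.map_congr (ae_restrict_of_forall_mem measurableSet_Icc fun t ht => if_pos ht.2)
  have hright : (volume.restrict (Ioc c 1)).map (fun t => if t ≤ c then a else b)
      = (volume.restrict (Ioc c 1)).map (fun _ => b) :=
    Measure.map_congr (ae_restrict_of_forall_mem measurableSet_Ioc
      fun t ht => if_neg (not_le.mpr ht.1))
  rw [hsplit, Measure.map_add _ _ (measurable_const.ite measurableSet_Iic measurable_const),
    hleft, hright, Measure.map_const, Measure.map_const, Measure.restrict_apply_univ,
    Measure.restrict_apply_univ, Real.volume_Icc, Real.volume_Ioc, sub_zero]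

lemma gaussianReal_map_igRoot (hm : 0 < m) (hl : 0 < l) :
    (gaussianReal 0 1).map (igRoot m l) = (volume.restrict (Ioo 0 m)).withDensity
      fun x => ENNReal.ofReal ((1 + x / m) * invGaussianDensity m l x) := by
  refine Measure.ext_of_lintegral _ fun g hg => ?_
  have hroot : Measurable (igRoot m l) := continuous_igRoot.measurable
  have hgauss_even (s : ℝ) : gaussianPDF 0 1 (-s) = gaussianPDF 0 1 s := by
    simp [gaussianPDF, gaussianPDFReal]
  rw [lintegral_map hg hroot, gaussianReal_of_var_ne_zero 0 one_ne_zero,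
    lintegral_withDensity_eq_lintegral_mul _ (measurable_gaussianPDF 0 1)
      (g := fun s => g (igRoot m l s)) (hg.comp hroot),
    lintegral_withDensity_eq_lintegral_mul _
      (by fun_prop : Measurable fun x => (1 + x / m) * invGaussianDensity m l x).ennreal_ofReal hg,
    lintegral_eq_two_mul_setLIntegral_Ioi_of_even
      (fun s => by simp only [Pi.mul_apply, igRoot_neg, hgauss_even]),
    ← igScore_image hm hl, lintegral_image_eq_lintegral_abs_deriv_mul measurableSet_Ioo
      (fun x hx => (hasDerivAt_igScore hm hx.1).hasDerivWithinAt) (injOn_igScore hm hl),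
    ← lintegral_const_mul' _ _ ENNReal.ofNat_ne_top]
  refine setLIntegral_congr_fun measurableSet_Ioo fun x hx => ?_
  have hx0 := hx.1
  have hderiv : 0 ≤ √l * (m + x) / (2 * m * x * √x) := by positivity
  simp only [Pi.mul_apply, igRoot_igScore hm hl hx, gaussianPDF, abs_neg, abs_of_nonneg hderiv]
  rw [← two_mul_abs_deriv_mul_gaussianPDFReal_igScore hm hl hx0, ENNReal.ofReal_mul zero_le_two,
    ENNReal.ofReal_mul hderiv, ENNReal.ofReal_ofNat]
  ring

lemma image_sq_div_Ioo (hm : 0 < m) : (fun x => m ^ 2 / x) '' Ioo 0 m = Ioi m := by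
  refine Subset.antisymm (image_subset_iff.mpr fun x hx => ?_) fun u (hu : m < u) => ?_
  · rw [mem_preimage, mem_Ioi, lt_div_iff₀ hx.1]
    nlinarith [hx.2]
  · have hu0 : 0 < u := hm.trans hu
    refine ⟨m ^ 2 / u, ⟨by positivity, ?_⟩, by field_simp⟩
    rw [div_lt_iff₀ hu0]
    nlinarith

lemma setLIntegral_Ioi_invGaussianDensity (hm : 0 < m) (g : ℝ → ℝ≥0∞) :
    ∫⁻ x in Ioi 0, ENNReal.ofReal (invGaussianDensity m l x) * g x
      = (∫⁻ x in Ioo 0 m, ENNReal.ofReal (invGaussianDensity m l x) * g x)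
        + ∫⁻ x in Ioo 0 m, ENNReal.ofReal (x / m * invGaussianDensity m l x) * g (m ^ 2 / x) := by
  have hderiv (x : ℝ) (hx : x ∈ Ioo 0 m) :
      HasDerivWithinAt (fun x => m ^ 2 / x) (-(m ^ 2 / x ^ 2)) (Ioo 0 m) x := by
    simpa [div_eq_mul_inv] using ((hasDerivAt_inv hx.1.ne').const_mul (m ^ 2)).hasDerivWithinAt
  have hinj : InjOn (fun x => m ^ 2 / x) (Ioo 0 m) := fun x hx y hy h => by
    field_simp [hx.1.ne', hy.1.ne'] at h
    exact h.symm
  rw [← Ioo_union_Ici_eq_Ioi hm, lintegral_union measurableSet_Ici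
      ((Iio_disjoint_Ici le_rfl).mono_left Ioo_subset_Iio_self),
    Measure.restrict_congr_set Ioi_ae_eq_Ici.symm, ← image_sq_div_Ioo hm,
    lintegral_image_eq_lintegral_abs_deriv_mul measurableSet_Ioo hderiv hinj]
  congr 1
  refine setLIntegral_congr_fun measurableSet_Ioo fun x hx => ?_
  have hx0 := hx.1
  rw [abs_neg, abs_of_nonneg (by positivity), ← mul_assoc, ← ENNReal.ofReal_mul (by positivity),
    invGaussianDensity_sq_div hm hx0]
  congr 2
  field_simp

/-- `μ² / x` is the other root of the quadratic defining `igRoot`. -/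
noncomputable def acceptOrReflect (m : ℝ) (p : ℝ × ℝ) : ℝ :=
  if p.2 ≤ m / (m + p.1) then p.1 else m ^ 2 / p.1

lemma measurable_acceptOrReflect (m : ℝ) : Measurable (acceptOrReflect m) :=
  Measurable.ite (measurableSet_le measurable_snd (by fun_prop)) measurable_fst (by fun_prop)

lemma lintegral_acceptOrReflect_uniform (hm : 0 < m) {x : ℝ} (hx : 0 < x) {g : ℝ → ℝ≥0∞}
    (hg : Measurable g) :
    ∫⁻ t, g (acceptOrReflect m (x, t)) ∂volume.restrict (Icc 0 1)
      = ENNReal.ofReal (m / (m + x)) * g x + ENNReal.ofReal (1 - m / (m + x)) * g (m ^ 2 / x) := by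
  have hc1 : m / (m + x) ≤ 1 := (div_le_one (by positivity)).mpr (by linarith)
  rw [← lintegral_map (g := fun t => acceptOrReflect m (x, t)) hg
    ((measurable_acceptOrReflect m).comp measurable_prodMk_left)]
  simp only [acceptOrReflect]
  rw [map_ite_le_restrict_Icc (by positivity) hc1, lintegral_add_measure, lintegral_smul_measure,
    lintegral_smul_measure, lintegral_dirac, lintegral_dirac, smul_eq_mul, smul_eq_mul]

lemma map_acceptOrReflect_prod_uniform (hm : 0 < m) :
    (((volume.restrict (Ioo 0 m)).withDensity
      fun x => ENNReal.ofReal ((1 + x / m) * invGaussianDensity m l x)).prod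
        (volume.restrict (Icc (0 : ℝ) 1))).map (acceptOrReflect m) = invGaussianMeasure m l := by
  refine Measure.ext_of_lintegral _ fun g hg => ?_
  have hsel := measurable_acceptOrReflect m
  have hinner :
      Measurable fun x => ∫⁻ t, g (acceptOrReflect m (x, t)) ∂volume.restrict (Icc 0 1) :=
    (hg.comp hsel).lintegral_prod_right'
  rw [lintegral_map hg hsel,
    lintegral_prod (fun z => g (acceptOrReflect m z)) (hg.comp hsel).aemeasurable,
    lintegral_withDensity_eq_lintegral_mul _ (by fun_prop) hinner,
    invGaussianMeasure, lintegral_withDensity_eq_lintegral_mul _ (by fun_prop) hg]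
  simp only [Pi.mul_apply]
  rw [setLIntegral_Ioi_invGaussianDensity hm,
    ← lintegral_add_left (f := fun x => ENNReal.ofReal (invGaussianDensity m l x) * g x)
      (by fun_prop)]
  refine setLIntegral_congr_fun measurableSet_Ioo fun x hx => ?_
  have hx0 := hx.1
  have hdens : 0 ≤ (1 + x / m) * invGaussianDensity m l x :=
    mul_nonneg (by positivity) (invGaussianDensity_nonneg m l x)
  rw [lintegral_acceptOrReflect_uniform hm hx0 hg, mul_add, ← mul_assoc, ← mul_assoc,
    ← ENNReal.ofReal_mul hdens, ← ENNReal.ofReal_mul hdens]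
  congr 3
  · field_simp
  · field_simp; ring

end MichaelSchucanyHaas

open MichaelSchucanyHaas

/-- Michael–Schucany–Haas sampling: if `ξ ~ N(0,1)`, `Y = ξ²`,
`X = μ + μ²Y/(2λ) − (μ/(2λ))√(4μλY + μ²Y²)`, and `η ~ U(0,1)` is independent of `ξ`,
then `IG := X` if `η ≤ μ/(μ+X)` and `IG := μ²/X` otherwise, has law `IG(μ, λ)`. -/
theorem michael_schucany_haas (m l : ℝ) (hm : 0 < m) (hl : 0 < l)
    {Ω : Type*} [MeasurableSpace Ω] (P : Measure Ω) [IsProbabilityMeasure P]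
    (ξ η : Ω → ℝ) (hξ : Measurable ξ) (hη : Measurable η)
    (hξlaw : Measure.map ξ P = gaussianReal 0 1)
    (hηlaw : Measure.map η P = volume.restrict (Set.Icc (0 : ℝ) 1))
    (hindep : IndepFun ξ η P)
    (Y X IG : Ω → ℝ)
    (hY : ∀ ω, Y ω = (ξ ω) ^ 2)
    (hX : ∀ ω, X ω = m + m ^ 2 * Y ω / (2 * l)
        - (m / (2 * l)) * Real.sqrt (4 * m * l * Y ω + m ^ 2 * (Y ω) ^ 2))
    (hIG : ∀ ω, IG ω = if η ω ≤ m / (m + X ω) then X ω else m ^ 2 / X ω) :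
    Measure.map IG P = invGaussianMeasure m l := by
  have hpair :
      P.map (fun ω => (ξ ω, η ω)) = (gaussianReal 0 1).prod (volume.restrict (Icc 0 1)) := by
    rw [← hξlaw, ← hηlaw]
    exact (indepFun_iff_map_prod_eq_prod_map_map hξ.aemeasurable hη.aemeasurable).mp hindep
  have hIG_eq : IG = acceptOrReflect m ∘ Prod.map (igRoot m l) id ∘ fun ω => (ξ ω, η ω) := by
    funext ω
    rw [hIG, hX, hY]
    rfl
  have hroot : Measurable (Prod.map (igRoot m l) (id : ℝ → ℝ)) :=
    continuous_igRoot.measurable.prodMap measurable_id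
  rw [hIG_eq, ← Measure.map_map (measurable_acceptOrReflect m) (hroot.comp (hξ.prodMk hη)),
    ← Measure.map_map hroot (hξ.prodMk hη), hpair, ← Measure.map_prod_map _ _
      continuous_igRoot.measurable measurable_id, Measure.map_id, gaussianReal_map_igRoot hm hl]
  exact map_acceptOrReflect_prod_uniform hm
end

section
/- Suppose nonnegative numbers (α̂ᵢⁿ, N̂ᵢⁿ, Λ̂ᵢⁿ) for 0 ≤ i ≤ n−1 satisfy Λ̂ᵢⁿ = α̂ᵢⁿ + k₀ⁿ·N̂ᵢⁿ and α̂ᵢⁿ = gᵢⁿ + Σ_{j=0}^{i−1} k_{i−j}ⁿ N̂ⱼⁿ, where gᵢⁿ = ∫_{tᵢⁿ}^{t_{i+1}ⁿ} g₀(s) ds and kⱼⁿ = ∫_{tⱼⁿ}^{t_{j+1}ⁿ} K(s) ds with tᵢⁿ = iT/n. Define Λⁿ_t = Σ_{i=0}^{⌊nt/T⌋−1} Λ̂ᵢⁿ and Nⁿ_t = Σ_{i=0}^{⌊nt/T⌋−1} N̂ᵢⁿ, and the measure Kⁿ = Σ_{i=0}^{n−1} kᵢⁿ δ_{tᵢⁿ}.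 Then for all t ∈ [0,T]: Λⁿ_t = ∫_0^{⌊nt/T⌋·T/n} g₀(s) ds + ∫_{[0,t]} Nⁿ_{t−s} Kⁿ(ds). -/
open MeasureTheory Set Finset

/-!
Summing `Λ̂ᵢ = gᵢ + Σ_{j ≤ i} k_{i-j} N̂ⱼ` over the first `m = ⌊nt/T⌋` cells, the `gᵢ` add up
to `∫_0^{mT/n} g₀`, and the double sum, regrouped along anti-diagonals, becomes
`Σ_{i<m} kᵢ Σ_{j<m-i} N̂ⱼ = Σ_{i<m} kᵢ Nⁿ_{t-tᵢ}`, because `⌊n(t - tᵢ)/T⌋ = m - i`.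
This is the integral of `Nⁿ_{t-·}` against `Kⁿ` over `[0,t]`.
-/

theorem sum_range_convolution_eq_sum_mul_sum_range_sub {R : Type*} [NonUnitalNonAssocSemiring R]
    (k N : ℕ → R) (m : ℕ) :
    ∑ i ∈ range m, ∑ j ∈ range (i + 1), k (i - j) * N j =
      ∑ i ∈ range m, k i * ∑ j ∈ range (m - i), N j := by
  have hreflect (i : ℕ) :
      ∑ j ∈ range (i + 1), k (i - j) * N j = ∑ j ∈ range (i + 1), k j * N (i - j) := by
    rw [← sum_range_reflect]
    refine sum_congr rfl fun j hj => ?_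
    rw [add_tsub_cancel_right, Nat.sub_sub_self (mem_range_succ_iff.1 hj)]
  simp_rw [hreflect, mul_sum]
  exact sum_range_diag_flip m fun a b => k a * N b

theorem intervalIntegral.sum_integral_uniform_cells {E : Type*} [NormedAddCommGroup E]
    [NormedSpace ℝ E] {g : ℝ → E} {h : ℝ} (hh : 0 ≤ h) {m : ℕ}
    (hg : IntervalIntegrable g volume 0 (m * h)) :
    ∑ i ∈ range m, ∫ x in i * h..(i + 1) * h, g x = ∫ x in 0..m * h, g x := by
  have hmem {i : ℕ} (hi : i ≤ m) : (i : ℝ) * h ∈ uIcc 0 (m * h) := by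
    rw [Set.uIcc_of_le (by positivity)]
    exact ⟨by positivity, by gcongr⟩
  simpa using sum_integral_adjacent_intervals (a := fun i : ℕ => (i : ℝ) * h) (n := m)
    fun i hi => hg.mono_set (uIcc_subset_uIcc (hmem hi.le) (hmem hi))

section UniformGrid

variable {T t : ℝ} {n : ℕ}

theorem floor_mul_div_le (hT : 0 < T) (htT : t ≤ T) : ⌊n * t / T⌋₊ ≤ n :=
  Nat.floor_le_of_le <| div_le_of_le_mul₀ hT.le (Nat.cast_nonneg n) (by gcongr)

theorem floor_mul_div_le_of_lt {i : ℕ} (hT : 0 < T) (hn : 0 < n) (hi : t < i * T / n) :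
    ⌊n * t / T⌋₊ ≤ i := by
  refine Nat.floor_le_of_le ((div_le_iff₀ hT).2 ?_)
  rw [lt_div_iff₀ (by positivity)] at hi
  linarith

theorem floor_mul_sub_div (hT : T ≠ 0) (hn : n ≠ 0) (i : ℕ) :
    ⌊n * (t - i * T / n) / T⌋₊ = ⌊n * t / T⌋₊ - i := by
  rw [← Nat.floor_sub_natCast]
  congr 1
  field_simp

end UniformGrid

theorem hawkes_ivi_volterra_reformulation_general
    (T : ℝ) (hT : 0 < T) (n : ℕ) (hn : 1 ≤ n)
    (g₀ : ℝ → ℝ)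
    (hg₀ : IntegrableOn g₀ (Icc 0 T))
    (k : ℕ → ℝ)
    (αh Nh Λh : ℕ → ℝ)
    (hα : ∀ i < n, αh i = (∫ s in (i * T / n : ℝ)..((i + 1) * T / n : ℝ), g₀ s) +
        ∑ j ∈ Finset.range i, k (i - j) * Nh j)
    (hΛ : ∀ i < n, Λh i = αh i + k 0 * Nh i)
    (Λn Nn : ℝ → ℝ)
    (hΛn : ∀ t, Λn t = ∑ i ∈ Finset.range (Nat.floor (n * t / T)), Λh i)
    (hNn : ∀ t, Nn t = ∑ i ∈ Finset.range (Nat.floor (n * t / T)), Nh i) :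
    ∀ t ∈ Icc (0:ℝ) T,
      Λn t = (∫ s in (0:ℝ)..((Nat.floor (n * t / T) : ℝ) * T / n), g₀ s) +
        ∑ i ∈ Finset.range n,
          (if (i * T / n : ℝ) ≤ t then k i * Nn (t - i * T / n) else 0) := by
  rintro t ⟨ht0, htT⟩
  set m := ⌊n * t / T⌋₊
  have hmn : m ≤ n := floor_mul_div_le hT htT
  have hn₀ : (0 : ℝ) < n := by exact_mod_cast hn
  -- truncated subtraction: `m - i = 0` for the atoms `tᵢ > t` and for `i = m`
  have hvanish {i : ℕ} (hi : m ≤ i) : k i * ∑ j ∈ range (m - i), Nh j = 0 := by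
    rw [Nat.sub_eq_zero_of_le hi, range_zero, sum_empty, mul_zero]
  have hconv : ∑ i ∈ range n, (if (i * T / n : ℝ) ≤ t then k i * Nn (t - i * T / n) else 0) =
      ∑ i ∈ range m, k i * ∑ j ∈ range (m - i), Nh j := by
    have hterm (i : ℕ) : (if (i * T / n : ℝ) ≤ t then k i * Nn (t - i * T / n) else 0) =
        k i * ∑ j ∈ range (m - i), Nh j := by
      rw [hNn, floor_mul_sub_div hT.ne' (by omega)]
      split_ifs with hi
      · rfl
      · exact (hvanish (floor_mul_div_le_of_lt hT hn (not_le.1 hi))).symm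
    simp_rw [hterm]
    exact (sum_subset (range_subset_range.2 hmn) fun i _ hi => hvanish (by simpa using hi)).symm
  have hg : ∫ s in 0..(m * T / n), g₀ s =
      ∑ i ∈ range m, ∫ s in (i * T / n)..((i + 1) * T / n), g₀ s := by
    simp_rw [mul_div_assoc]
    refine (intervalIntegral.sum_integral_uniform_cells (by positivity)
      (hg₀.mono_set ?_).intervalIntegrable).symm
    rw [Set.uIcc_of_le (by positivity)]
    refine Icc_subset_Icc_right ?_
    calc (m : ℝ) * (T / n) ≤ n * (T / n) := by gcongr
      _ = T := mul_div_cancel₀ T hn₀.ne'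
  rw [hΛn, hconv, hg, ← sum_range_convolution_eq_sum_mul_sum_range_sub, ← sum_add_distrib]
  refine sum_congr rfl fun i hi => ?_
  have hin : i < n := (mem_range.1 hi).trans_le hmn
  rw [hΛ i hin, hα i hin, sum_range_succ, Nat.sub_self]
  ring

/-- Volterra reformulation of the Hawkes iVi scheme: if `Λ̂ᵢ = α̂ᵢ + k₀ N̂ᵢ` with
`α̂ᵢ = ∫ g₀` over the `i`-th cell plus `Σ_{j<i} k_{i−j} N̂ⱼ`, then the piecewise-constant
process `Λⁿ_t = Σ_{i<⌊nt/T⌋} Λ̂ᵢ` satisfies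
`Λⁿ_t = ∫_0^{⌊nt/T⌋T/n} g₀ + ∫_{[0,t]} Nⁿ_{t−s} Kⁿ(ds)` with `Kⁿ = Σᵢ kᵢ δ_{iT/n}`. -/
theorem hawkes_ivi_volterra_reformulation
    (T : ℝ) (hT : 0 < T) (n : ℕ) (hn : 1 ≤ n)
    (g₀ K : ℝ → ℝ)
    (hg₀ : IntegrableOn g₀ (Icc 0 T)) (hg₀nn : ∀ s, 0 ≤ g₀ s)
    (hK : IntegrableOn K (Icc 0 T)) (hKnn : ∀ s, 0 ≤ K s)
    (k : ℕ → ℝ) (hk : ∀ j, k j = ∫ s in (j * T / n : ℝ)..((j + 1) * T / n : ℝ), K s)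
    (αh Nh Λh : ℕ → ℝ)
    (hnonneg : ∀ i < n, 0 ≤ αh i ∧ 0 ≤ Nh i ∧ 0 ≤ Λh i)
    (hα : ∀ i < n, αh i = (∫ s in (i * T / n : ℝ)..((i + 1) * T / n : ℝ), g₀ s) +
        ∑ j ∈ Finset.range i, k (i - j) * Nh j)
    (hΛ : ∀ i < n, Λh i = αh i + k 0 * Nh i)
    (Λn Nn : ℝ → ℝ)
    (hΛn : ∀ t, Λn t = ∑ i ∈ Finset.range (Nat.floor (n * t / T)), Λh i)
    (hNn : ∀ t, Nn t = ∑ i ∈ Finset.range (Nat.floor (n * t / T)), Nh i) :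
    ∀ t ∈ Icc (0:ℝ) T,
      Λn t = (∫ s in (0:ℝ)..((Nat.floor (n * t / T) : ℝ) * T / n), g₀ s) +
        ∑ i ∈ Finset.range n,
          (if (i * T / n : ℝ) ≤ t then k i * Nn (t - i * T / n) else 0) :=
  hawkes_ivi_volterra_reformulation_general T hT n hn g₀ hg₀ k αh Nh Λh hα hΛ Λn Nn hΛn hNn
end

section
/- Let α > 0 and k ∈ (0,1), let ξ ~ IG(α/(1−k), (α/k)²) and, conditional on ξ, let N̂ ~ Poisson(ξ). Set Λ̂ = α + k·N̂. Then E[N̂] = E[Λ̂] = α/(1−k) and E[(N̂ − Λ̂)²] = (k² + (1−k)²)·E[Λ̂]. -/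
/-!
Conditionally on `ξ`, `N̂` is Poisson with parameter `ξ`, so `E[N̂] = E[ξ]` and
`E[N̂²] = E[ξ²] + E[ξ]`; everything reduces to the first two moments of `IG(μ, λ)`.

On `(0, ∞)` the `IG(μ, λ)` density is `C x^{-3/2} e^{-a x - b/x}` with `a = λ/(2μ²)`, `b = λ/2`.
The inversion `x ↦ (b/a)/x` preserves `e^{-a x - b/x}`, which turns the total mass `1` into
`E[ξ] = √(b/a) = μ`. Integrating `(x^{1/2} e^{-a x - b/x})'` over `(0, ∞)` gives
`a E[ξ²] = E[ξ]/2 + b`, i.e. `E[ξ²] = μ³/λ + μ²`.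
-/

open MeasureTheory Set

open Filter Topology
open scoped ENNReal Nat

noncomputable def gigKernel (a b x : ℝ) : ℝ := Real.exp (-a * x - b / x)

/-- `gigIntegral a b p = 2 (b/a)^((p+1)/2) K_{p+1}(2√(ab))`, with `K` the modified Bessel function
of the second kind; the inversion and recurrence identities below are `K_{-ν} = K_ν` and
`K_{ν+1} - K_{ν-1} = (2ν/z) K_ν`. -/
noncomputable def gigIntegral (a b p : ℝ) : ℝ := ∫ x in Ioi 0, x ^ p * gigKernel a b x

section GIGIntegral

variable {a b p : ℝ}

lemma gigKernel_nonneg (a b x : ℝ) : 0 ≤ gigKernel a b x := (Real.exp_pos _).le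

lemma gigKernel_le_exp_neg_mul (hb : 0 ≤ b) {x : ℝ} (hx : 0 ≤ x) :
    gigKernel a b x ≤ Real.exp (-a * x) :=
  Real.exp_le_exp.mpr (by linarith [div_nonneg hb hx])

lemma gigKernel_le_exp_neg_div (ha : 0 ≤ a) {x : ℝ} (hx : 0 ≤ x) :
    gigKernel a b x ≤ Real.exp (-(b / x)) :=
  Real.exp_le_exp.mpr (by nlinarith [mul_nonneg ha hx])

lemma continuousOn_rpow_mul_gigKernel (a b p : ℝ) :
    ContinuousOn (fun x => x ^ p * gigKernel a b x) (Ioi 0) := by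
  intro x hx
  have hx₀ : x ≠ 0 := (mem_Ioi.mp hx).ne'
  have hpow : ContinuousAt (fun x : ℝ => x ^ p) x := Real.continuousAt_rpow_const _ _ (Or.inl hx₀)
  unfold gigKernel
  exact ContinuousAt.continuousWithinAt (by fun_prop (disch := assumption))

lemma rpow_mul_gigKernel_le_of_le_one (ha : 0 ≤ a) (hb : 0 < b) (hp : -2 ≤ p) {x : ℝ}
    (hx₀ : 0 < x) (hx₁ : x ≤ 1) : x ^ p * gigKernel a b x ≤ 2 / b ^ 2 := by
  have hpow : x ^ p ≤ x⁻¹ ^ 2 := by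
    calc x ^ p ≤ x ^ (-2 : ℝ) := Real.rpow_le_rpow_of_exponent_ge hx₀ hx₁ hp
      _ = x⁻¹ ^ 2 := by rw [Real.rpow_neg hx₀.le, inv_pow]; norm_cast
  have hexp : (b * x⁻¹) ^ 2 / 2 ≤ Real.exp (b * x⁻¹) := by
    simpa using Real.pow_div_factorial_le_exp _ (by positivity) 2
  calc x ^ p * gigKernel a b x ≤ x⁻¹ ^ 2 * Real.exp (-(b * x⁻¹)) :=
        mul_le_mul hpow (gigKernel_le_exp_neg_div ha hx₀.le) (gigKernel_nonneg ..) (by positivity)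
    _ ≤ 2 / b ^ 2 := by
        rw [Real.exp_neg, ← div_eq_mul_inv, div_le_div_iff₀ (Real.exp_pos _) (by positivity)]
        nlinarith

lemma rpow_mul_gigKernel_le_of_one_le (ha : 0 < a) (hb : 0 ≤ b) (hp : p ≤ 1) {x : ℝ}
    (hx : 1 ≤ x) : x ^ p * gigKernel a b x ≤ 2 / a * Real.exp (-(a / 2) * x) := by
  have hpow : x ^ p ≤ x := by simpa using Real.rpow_le_rpow_of_exponent_le hx hp
  have hlin : x ≤ 2 / a * Real.exp (a / 2 * x) := by
    rw [div_mul_eq_mul_div, le_div_iff₀ ha]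
    linarith [Real.add_one_le_exp (a / 2 * x)]
  calc x ^ p * gigKernel a b x ≤ 2 / a * Real.exp (a / 2 * x) * Real.exp (-a * x) :=
        mul_le_mul (hpow.trans hlin) (gigKernel_le_exp_neg_mul hb (by linarith))
          (gigKernel_nonneg ..) (by positivity)
    _ = 2 / a * Real.exp (-(a / 2) * x) := by rw [mul_assoc, ← Real.exp_add]; ring_nf

lemma integrableOn_rpow_mul_gigKernel (ha : 0 < a) (hb : 0 < b) (hp₁ : -2 ≤ p) (hp₂ : p ≤ 1) :
    IntegrableOn (fun x => x ^ p * gigKernel a b x) (Ioi 0) := by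
  have hcont := continuousOn_rpow_mul_gigKernel a b p
  have hnorm : ∀ x ∈ Ioi (0 : ℝ), ‖x ^ p * gigKernel a b x‖ = x ^ p * gigKernel a b x :=
    fun x hx => Real.norm_of_nonneg
      (mul_nonneg (Real.rpow_nonneg (le_of_lt hx) _) (gigKernel_nonneg ..))
  rw [← Ioc_union_Ioi_eq_Ioi zero_le_one]
  refine IntegrableOn.union
    ⟨(hcont.mono Ioc_subset_Ioi_self).aestronglyMeasurable measurableSet_Ioc,
      HasFiniteIntegral.restrict_of_bounded (C := 2 / b ^ 2) measure_Ioc_lt_top ?_⟩ ?_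
  · filter_upwards [ae_restrict_mem measurableSet_Ioc] with x hx
    rw [hnorm x hx.1]
    exact rpow_mul_gigKernel_le_of_le_one ha.le hb hp₁ hx.1 hx.2
  · refine ((exp_neg_integrableOn_Ioi 1 (half_pos ha)).const_mul (2 / a)).mono'
      ((hcont.mono (Ioi_subset_Ioi zero_le_one)).aestronglyMeasurable measurableSet_Ioi) ?_
    filter_upwards [ae_restrict_mem measurableSet_Ioi] with x (hx : 1 < x)
    rw [hnorm x (zero_lt_one.trans hx)]
    exact rpow_mul_gigKernel_le_of_one_le ha hb.le hp₂ hx.le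

lemma gigKernel_div (ha : a ≠ 0) (hb : b ≠ 0) {y : ℝ} (hy : y ≠ 0) :
    gigKernel a b (b / a / y) = gigKernel a b y := by
  unfold gigKernel
  congr 1
  field_simp
  ring

lemma gigIntegral_eq_rpow_mul_gigIntegral (ha : 0 < a) (hb : 0 < b) (p : ℝ) :
    gigIntegral a b p = (b / a) ^ (p + 1) * gigIntegral a b (-p - 2) := by
  set c := b / a
  have hc : 0 < c := div_pos hb ha
  have himage : (fun y => c / y) '' Ioi 0 = Ioi 0 := by
    refine (image_subset_iff.mpr fun y (hy : 0 < y) => div_pos hc hy).antisymm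
      fun y (hy : 0 < y) => ⟨c / y, div_pos hc hy, div_div_cancel₀ hc.ne'⟩
  have hderiv : ∀ y ∈ Ioi (0 : ℝ), HasDerivWithinAt (fun y => c / y) (-(c / y ^ 2)) (Ioi 0) y :=
    fun y hy => by
      simpa [div_eq_mul_inv] using ((hasDerivAt_inv (ne_of_gt hy)).const_mul c).hasDerivWithinAt
  have hinj : InjOn (fun y => c / y) (Ioi 0) := fun y₁ _ y₂ _ h => by
    simpa only [div_eq_mul_inv, mul_right_inj' hc.ne', inv_inj] using h
  rw [gigIntegral, ← himage,
    integral_image_eq_integral_abs_deriv_smul measurableSet_Ioi hderiv hinj, gigIntegral,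
    ← integral_const_mul]
  refine setIntegral_congr_fun measurableSet_Ioi fun y (hy : 0 < y) => ?_
  rw [smul_eq_mul, abs_neg, abs_of_pos (by positivity), gigKernel_div ha.ne' hb.ne' hy.ne',
    Real.div_rpow hc.le hy.le, Real.rpow_add hc, Real.rpow_one,
    show -p - 2 = -(p + 2) by ring, Real.rpow_neg hy.le, Real.rpow_add hy, Real.rpow_two]
  have : 0 < y ^ p := Real.rpow_pos_of_pos hy p
  field_simp

lemma hasDerivAt_rpow_mul_gigKernel (q : ℝ) {x : ℝ} (hx : 0 < x) :
    HasDerivAt (fun x => x ^ q * gigKernel a b x)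
      (q * (x ^ (q - 1) * gigKernel a b x) - a * (x ^ q * gigKernel a b x)
        + b * (x ^ (q - 2) * gigKernel a b x)) x := by
  have hpow := Real.hasDerivAt_rpow_const (p := q) (Or.inl hx.ne')
  have hexponent : HasDerivAt (fun x => -a * x - b / x) (-a + b / x ^ 2) x := by
    have h := ((hasDerivAt_id x).const_mul (-a)).sub ((hasDerivAt_inv hx.ne').const_mul b)
    simp only [id, mul_one, mul_neg, sub_neg_eq_add, ← div_eq_mul_inv] at h
    exact h
  refine (hpow.mul hexponent.exp).congr_deriv ?_
  rw [Real.rpow_sub hx, Real.rpow_sub hx, Real.rpow_one, Real.rpow_two, gigKernel]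
  field_simp
  ring

lemma continuousWithinAt_rpow_mul_gigKernel_zero (ha : 0 ≤ a) (hb : 0 ≤ b) {q : ℝ}
    (hq : 0 < q) :
    ContinuousWithinAt (fun x => x ^ q * gigKernel a b x) (Ici 0) 0 := by
  have hpow : Tendsto (fun x : ℝ => x ^ q) (𝓝[Ici 0] 0) (𝓝 0) := by
    have h := (Real.continuousAt_rpow_const 0 q (Or.inr hq.le)).continuousWithinAt (s := Ici 0)
    rwa [ContinuousWithinAt, Real.zero_rpow hq.ne'] at h
  rw [ContinuousWithinAt, Real.zero_rpow hq.ne', zero_mul]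
  refine squeeze_zero' ?_ ?_ hpow <;> filter_upwards [self_mem_nhdsWithin] with x (hx : 0 ≤ x)
  · exact mul_nonneg (Real.rpow_nonneg hx q) (gigKernel_nonneg ..)
  · have hK : gigKernel a b x ≤ 1 :=
      (gigKernel_le_exp_neg_mul hb hx).trans (Real.exp_le_one_iff.mpr (by nlinarith))
    exact mul_le_of_le_one_right (Real.rpow_nonneg hx q) hK

lemma tendsto_rpow_mul_gigKernel_atTop (ha : 0 < a) (hb : 0 ≤ b) {q : ℝ} (hq : q ≤ 1) :
    Tendsto (fun x => x ^ q * gigKernel a b x) atTop (𝓝 0) := by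
  have hexp : Tendsto (fun x => 2 / a * Real.exp (-(a / 2) * x)) atTop (𝓝 0) := by
    simpa using (Real.tendsto_exp_neg_atTop_nhds_zero.comp
      (tendsto_id.const_mul_atTop (half_pos ha))).const_mul (2 / a)
  refine squeeze_zero' ?_ ?_ hexp
  · filter_upwards [eventually_ge_atTop 0] with x hx
    exact mul_nonneg (Real.rpow_nonneg hx q) (gigKernel_nonneg ..)
  · filter_upwards [eventually_ge_atTop 1] with x hx
    exact rpow_mul_gigKernel_le_of_one_le ha hb hq hx

lemma gigIntegral_recurrence (ha : 0 < a) (hb : 0 < b) {q : ℝ} (hq₀ : 0 < q) (hq₁ : q ≤ 1) :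
    a * gigIntegral a b q = q * gigIntegral a b (q - 1) + b * gigIntegral a b (q - 2) := by
  have i₁ : IntegrableOn (fun x => q * (x ^ (q - 1) * gigKernel a b x)) (Ioi 0) :=
    (integrableOn_rpow_mul_gigKernel ha hb (by linarith) (by linarith)).const_mul q
  have i₂ : IntegrableOn (fun x => a * (x ^ q * gigKernel a b x)) (Ioi 0) :=
    (integrableOn_rpow_mul_gigKernel ha hb (by linarith) hq₁).const_mul a
  have i₃ : IntegrableOn (fun x => b * (x ^ (q - 2) * gigKernel a b x)) (Ioi 0) :=
    (integrableOn_rpow_mul_gigKernel ha hb (by linarith) (by linarith)).const_mul b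
  have i₁₂ : IntegrableOn
      (fun x => q * (x ^ (q - 1) * gigKernel a b x) - a * (x ^ q * gigKernel a b x)) (Ioi 0) :=
    i₁.sub i₂
  have hFTC := integral_Ioi_of_hasDerivAt_of_tendsto
    (continuousWithinAt_rpow_mul_gigKernel_zero ha.le hb.le hq₀)
    (fun x hx => hasDerivAt_rpow_mul_gigKernel q hx) (i₁₂.add i₃)
    (tendsto_rpow_mul_gigKernel_atTop ha hb.le hq₁)
  rw [integral_add i₁₂ i₃, integral_sub i₁ i₂, integral_const_mul, integral_const_mul,
    integral_const_mul, Real.zero_rpow hq₀.ne', zero_mul, sub_zero] at hFTC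
  simp only [gigIntegral]
  linarith

end GIGIntegral

section InvGaussian

variable {m l : ℝ}

lemma invGaussianDensity_nonneg (m l x : ℝ) : 0 ≤ invGaussianDensity m l x :=
  mul_nonneg (Real.sqrt_nonneg _) (Real.exp_pos _).le

lemma measurable_invGaussianDensity (m l : ℝ) : Measurable (invGaussianDensity m l) := by
  unfold invGaussianDensity
  fun_prop

lemma invGaussianDensity_eq (hm : m ≠ 0) {x : ℝ} (hx : 0 < x) :
    invGaussianDensity m l x = √(l / (2 * Real.pi)) * Real.exp (l / m) *
      (x ^ (-(3 / 2) : ℝ) * gigKernel (l / (2 * m ^ 2)) (l / 2) x) := by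
  have hsqrt : √(l / (2 * Real.pi * x ^ 3)) = √(l / (2 * Real.pi)) * x ^ (-(3 / 2) : ℝ) := by
    rw [div_mul_eq_div_div, div_eq_mul_inv _ (x ^ 3), Real.sqrt_mul' _ (by positivity),
      Real.sqrt_eq_rpow, Real.sqrt_eq_rpow, ← Real.rpow_natCast, ← Real.rpow_neg hx.le,
      ← Real.rpow_mul hx.le]
    norm_num
  have hexponent :
      -l * (x - m) ^ 2 / (2 * m ^ 2 * x) = l / m + (-(l / (2 * m ^ 2)) * x - l / 2 / x) := by
    field_simp
    ring
  rw [invGaussianDensity, hsqrt, hexponent, Real.exp_add, gigKernel]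
  ring

lemma lintegral_ofReal_invGaussianMeasure {f : ℝ → ℝ} (hf : Measurable f)
    (hf₀ : ∀ x, 0 < x → 0 ≤ f x)
    (hint : IntegrableOn (fun x => invGaussianDensity m l x * f x) (Ioi 0)) :
    ∫⁻ x, ENNReal.ofReal (f x) ∂invGaussianMeasure m l =
      ENNReal.ofReal (∫ x in Ioi 0, invGaussianDensity m l x * f x) := by
  rw [invGaussianMeasure, lintegral_withDensity_eq_lintegral_mul _
      (measurable_invGaussianDensity m l).ennreal_ofReal hf.ennreal_ofReal,
    ofReal_integral_eq_lintegral_ofReal hint]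
  · refine setLIntegral_congr_fun measurableSet_Ioi fun x _ => ?_
    simp only [Pi.mul_apply, ENNReal.ofReal_mul (invGaussianDensity_nonneg m l x)]
  · filter_upwards [ae_restrict_mem measurableSet_Ioi] with x hx
    exact mul_nonneg (invGaussianDensity_nonneg m l x) (hf₀ x hx)

lemma lintegral_ofReal_pow_invGaussianMeasure (hm : m ≠ 0) (hl : 0 < l) {j : ℕ} (hj : j ≤ 2) :
    ∫⁻ x, ENNReal.ofReal (x ^ j) ∂invGaussianMeasure m l =
      ENNReal.ofReal (√(l / (2 * Real.pi)) * Real.exp (l / m) *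
        gigIntegral (l / (2 * m ^ 2)) (l / 2) (j - 3 / 2)) := by
  have hdens : EqOn (fun x => invGaussianDensity m l x * x ^ j)
      (fun x => √(l / (2 * Real.pi)) * Real.exp (l / m) *
        (x ^ ((j : ℝ) - 3 / 2) * gigKernel (l / (2 * m ^ 2)) (l / 2) x)) (Ioi 0) := by
    intro x (hx : 0 < x)
    simp only
    rw [invGaussianDensity_eq hm hx, sub_eq_neg_add, Real.rpow_add hx, Real.rpow_natCast]
    ring
  have hint : IntegrableOn (fun x => x ^ ((j : ℝ) - 3 / 2) * gigKernel (l / (2 * m ^ 2)) (l / 2) x)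
      (Ioi 0) := by
    have : (j : ℝ) ≤ 2 := by exact_mod_cast hj
    exact integrableOn_rpow_mul_gigKernel (by positivity) (by positivity) (by linarith)
      (by linarith)
  rw [lintegral_ofReal_invGaussianMeasure (by fun_prop) (fun x hx => pow_nonneg hx.le j)
      (IntegrableOn.congr_fun (hint.const_mul _) hdens.symm measurableSet_Ioi),
    setIntegral_congr_fun measurableSet_Ioi hdens, integral_const_mul, gigIntegral]

lemma invGaussianMeasure_moments [IsProbabilityMeasure (invGaussianMeasure m l)]
    (hm : 0 < m) (hl : 0 < l) :
    ∫⁻ x, ENNReal.ofReal x ∂invGaussianMeasure m l = ENNReal.ofReal m ∧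
    ∫⁻ x, ENNReal.ofReal (x ^ 2) ∂invGaussianMeasure m l =
      ENNReal.ofReal (m ^ 3 / l + m ^ 2) := by
  set a := l / (2 * m ^ 2)
  set b := l / 2
  set C := √(l / (2 * Real.pi)) * Real.exp (l / m)
  have hmoment := fun (j : ℕ) => lintegral_ofReal_pow_invGaussianMeasure (j := j) hm.ne' hl
  have hmass : C * gigIntegral a b (-(3 / 2)) = 1 := by
    have h := hmoment 0 (by norm_num)
    simp only [pow_zero, ENNReal.ofReal_one, lintegral_const, measure_univ, one_mul,
      Nat.cast_zero, zero_sub] at h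
    exact ((ENNReal.ofReal_eq_one).mp h.symm)
  have hmean : C * gigIntegral a b (-(1 / 2)) = m := by
    have hba : b / a = m ^ 2 := by simp only [a, b]; field_simp
    rw [gigIntegral_eq_rpow_mul_gigIntegral (by positivity) (by positivity), hba,
      show -(1 / 2 : ℝ) + 1 = 1 / 2 by norm_num, show -(-(1 / 2 : ℝ)) - 2 = -(3 / 2) by norm_num,
      mul_left_comm, hmass, mul_one, ← Real.sqrt_eq_rpow, Real.sqrt_sq hm.le]
  have hsecond : C * gigIntegral a b (1 / 2) = m ^ 3 / l + m ^ 2 := by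
    have h := gigIntegral_recurrence (a := a) (b := b) (by positivity) (by positivity)
      (q := 1 / 2) (by norm_num) (by norm_num)
    rw [show (1 / 2 : ℝ) - 1 = -(1 / 2) by norm_num,
      show (1 / 2 : ℝ) - 2 = -(3 / 2) by norm_num] at h
    have h' : a * (C * gigIntegral a b (1 / 2)) = m / 2 + b := by
      rw [mul_left_comm, h, mul_add, mul_left_comm, mul_left_comm C, hmean, hmass]; ring
    calc C * gigIntegral a b (1 / 2) = (m / 2 + b) / a := by
          rw [← h', mul_div_cancel_left₀ _ (by positivity)]
      _ = m ^ 3 / l + m ^ 2 := by simp only [a, b]; field_simp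
  constructor
  · have h := hmoment 1 (by norm_num)
    simp only [pow_one] at h
    rw [h, show ((1 : ℕ) : ℝ) - 3 / 2 = -(1 / 2) by norm_num]
    exact congrArg ENNReal.ofReal hmean
  · rw [hmoment 2 le_rfl, show ((2 : ℕ) : ℝ) - 3 / 2 = 1 / 2 by norm_num]
    exact congrArg ENNReal.ofReal hsecond

lemma ae_pos_invGaussianMeasure (m l : ℝ) : ∀ᵐ x ∂invGaussianMeasure m l, 0 < x :=
  (withDensity_absolutelyContinuous _ _).ae_le (ae_restrict_mem measurableSet_Ioi)

end InvGaussian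

section Poisson

variable (x : ℝ)

lemma hasSum_poisson : HasSum (fun n : ℕ => Real.exp (-x) * x ^ n / n !) 1 := by
  have h := (NormedSpace.expSeries_div_hasSum_exp x).mul_left (Real.exp (-x))
  rw [← Real.exp_eq_exp_ℝ, ← Real.exp_add, neg_add_cancel, Real.exp_zero] at h
  simpa only [mul_div_assoc] using h

lemma hasSum_natCast_mul_poisson : HasSum (fun n : ℕ => n * (Real.exp (-x) * x ^ n / n !)) x := by
  rw [← hasSum_nat_add_iff' 1, Finset.sum_range_one, Nat.cast_zero, zero_mul, sub_zero]
  have h := (hasSum_poisson x).mul_left x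
  rw [mul_one] at h
  refine h.congr_fun fun n => ?_
  push_cast [Nat.factorial_succ]
  field_simp
  ring

lemma hasSum_natCast_sq_mul_poisson :
    HasSum (fun n : ℕ => (n : ℝ) ^ 2 * (Real.exp (-x) * x ^ n / n !)) (x ^ 2 + x) := by
  rw [← hasSum_nat_add_iff' 1, Finset.sum_range_one, Nat.cast_zero, zero_pow two_ne_zero,
    zero_mul, sub_zero]
  have h := ((hasSum_natCast_mul_poisson x).mul_left x).add ((hasSum_poisson x).mul_left x)
  rw [mul_one, ← sq] at h
  refine h.congr_fun fun n => ?_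
  push_cast [Nat.factorial_succ]
  field_simp
  ring

end Poisson

lemma integrable_and_integral_eq_of_lintegral_ofReal_eq {Ω : Type*} [MeasurableSpace Ω]
    {μ : Measure Ω} {f : Ω → ℝ} (hf : AEStronglyMeasurable f μ) (hf₀ : 0 ≤ᵐ[μ] f) {c : ℝ}
    (hc : 0 ≤ c) (h : ∫⁻ ω, ENNReal.ofReal (f ω) ∂μ = ENNReal.ofReal c) :
    Integrable f μ ∧ ∫ ω, f ω ∂μ = c :=
  ⟨(lintegral_ofReal_ne_top_iff_integrable hf hf₀).mp (h ▸ ENNReal.ofReal_ne_top),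
    by rw [integral_eq_lintegral_of_nonneg_ae hf₀ hf, h, ENNReal.toReal_ofReal hc]⟩

section MixedPoisson

variable {Ω : Type*} [MeasurableSpace Ω] {P : Measure Ω} {N : Ω → ℕ}

lemma lintegral_comp_eq_tsum (hN : Measurable N) (F : ℕ → ℝ≥0∞) :
    ∫⁻ ω, F (N ω) ∂P = ∑' n, F n * P {ω | N ω = n} := by
  rw [← lintegral_map (measurable_from_nat (f := F)) hN, lintegral_countable']
  refine tsum_congr fun n => ?_
  rw [Measure.map_apply hN (measurableSet_singleton n)]
  rfl

lemma lintegral_ofReal_comp_eq_of_mixedPoisson {ν : Measure ℝ} (hN : Measurable N)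
    (hlaw : ∀ n : ℕ, P {ω | N ω = n} = ∫⁻ x, ENNReal.ofReal (Real.exp (-x) * x ^ n / n !) ∂ν)
    (hν : ∀ᵐ x ∂ν, 0 ≤ x) {F : ℕ → ℝ} (hF : ∀ n, 0 ≤ F n) {T : ℝ → ℝ}
    (hT : ∀ x, HasSum (fun n => F n * (Real.exp (-x) * x ^ n / n !)) (T x)) :
    ∫⁻ ω, ENNReal.ofReal (F (N ω)) ∂P = ∫⁻ x, ENNReal.ofReal (T x) ∂ν := by
  have hmeas (n : ℕ) :
      Measurable fun x : ℝ => ENNReal.ofReal (F n * (Real.exp (-x) * x ^ n / n !)) := by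
    fun_prop
  calc ∫⁻ ω, ENNReal.ofReal (F (N ω)) ∂P
      = ∑' n, ∫⁻ x, ENNReal.ofReal (F n * (Real.exp (-x) * x ^ n / n !)) ∂ν := by
        rw [lintegral_comp_eq_tsum hN fun n => ENNReal.ofReal (F n)]
        refine tsum_congr fun n => ?_
        rw [hlaw, ← lintegral_const_mul _ (by fun_prop)]
        simp only [ENNReal.ofReal_mul (hF n)]
    _ = ∫⁻ x, ∑' n, ENNReal.ofReal (F n * (Real.exp (-x) * x ^ n / n !)) ∂ν :=
        (lintegral_tsum fun n => (hmeas n).aemeasurable).symm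
    _ = ∫⁻ x, ENNReal.ofReal (T x) ∂ν := by
        refine lintegral_congr_ae (hν.mono fun x hx => ?_)
        dsimp only
        rw [← (hT x).tsum_eq, ENNReal.ofReal_tsum_of_nonneg
          (fun n => mul_nonneg (hF n) (by positivity)) (hT x).summable]

lemma integral_natCast_of_mixedPoisson {ν : Measure ℝ} (hN : Measurable N)
    (hlaw : ∀ n : ℕ, P {ω | N ω = n} = ∫⁻ x, ENNReal.ofReal (Real.exp (-x) * x ^ n / n !) ∂ν)
    (hν : ∀ᵐ x ∂ν, 0 ≤ x) {c : ℝ} (hc : 0 ≤ c)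
    (hmean : ∫⁻ x, ENNReal.ofReal x ∂ν = ENNReal.ofReal c) :
    Integrable (fun ω => (N ω : ℝ)) P ∧ ∫ ω, (N ω : ℝ) ∂P = c :=
  integrable_and_integral_eq_of_lintegral_ofReal_eq
    (measurable_from_nat.comp hN).aestronglyMeasurable (ae_of_all _ fun _ => Nat.cast_nonneg _) hc
    ((lintegral_ofReal_comp_eq_of_mixedPoisson hN hlaw hν Nat.cast_nonneg
      hasSum_natCast_mul_poisson).trans hmean)

lemma integral_natCast_sq_of_mixedPoisson {ν : Measure ℝ} (hN : Measurable N)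
    (hlaw : ∀ n : ℕ, P {ω | N ω = n} = ∫⁻ x, ENNReal.ofReal (Real.exp (-x) * x ^ n / n !) ∂ν)
    (hν : ∀ᵐ x ∂ν, 0 ≤ x) {c₁ c₂ : ℝ} (hc₁ : 0 ≤ c₁) (hc₂ : 0 ≤ c₂)
    (hmean : ∫⁻ x, ENNReal.ofReal x ∂ν = ENNReal.ofReal c₁)
    (hsecond : ∫⁻ x, ENNReal.ofReal (x ^ 2) ∂ν = ENNReal.ofReal c₂) :
    Integrable (fun ω => (N ω : ℝ) ^ 2) P ∧ ∫ ω, (N ω : ℝ) ^ 2 ∂P = c₂ + c₁ := by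
  refine integrable_and_integral_eq_of_lintegral_ofReal_eq (f := fun ω => (N ω : ℝ) ^ 2)
    ((measurable_from_nat.comp hN).pow_const 2).aestronglyMeasurable
    (ae_of_all _ fun _ => sq_nonneg _) (add_nonneg hc₂ hc₁) ?_
  rw [lintegral_ofReal_comp_eq_of_mixedPoisson hN hlaw hν (fun n => sq_nonneg (n : ℝ))
      hasSum_natCast_sq_mul_poisson, ENNReal.ofReal_add hc₂ hc₁, ← hsecond, ← hmean,
    ← lintegral_add_left (by fun_prop)]
  exact lintegral_congr_ae (hν.mono fun x hx => ENNReal.ofReal_add (sq_nonneg x) hx)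

end MixedPoisson

lemma integral_mul_add_const_sq {Ω : Type*} [MeasurableSpace Ω] {μ : Measure Ω}
    [IsProbabilityMeasure μ] {X : Ω → ℝ} (hX : Integrable X μ)
    (hX₂ : Integrable (fun ω => X ω ^ 2) μ) (c d : ℝ) :
    ∫ ω, (c * X ω + d) ^ 2 ∂μ = c ^ 2 * ∫ ω, X ω ^ 2 ∂μ + 2 * c * d * ∫ ω, X ω ∂μ + d ^ 2 := by
  have hexpand :
      (fun ω => (c * X ω + d) ^ 2) = fun ω => c ^ 2 * X ω ^ 2 + 2 * c * d * X ω + d ^ 2 := by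
    funext ω
    ring
  have hX₁₂ : Integrable (fun ω => c ^ 2 * X ω ^ 2 + 2 * c * d * X ω) μ :=
    (hX₂.const_mul _).add (hX.const_mul _)
  rw [hexpand, integral_add hX₁₂ (integrable_const _),
    integral_add (hX₂.const_mul _) (hX.const_mul _), integral_const_mul, integral_const_mul,
    integral_const, probReal_univ, one_smul]

/-- One-step moment identities of the Hawkes iVi scheme: if `ξ ~ IG(α/(1−k), (α/k)²)`,
`N̂ | ξ ~ Poisson(ξ)`, and `Λ̂ = α + k N̂`, then `E[N̂] = E[Λ̂] = α/(1−k)` and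
`E[(N̂ − Λ̂)²] = (k² + (1−k)²) E[Λ̂]`. -/
theorem hawkes_ivi_one_step_moments
    (α k : ℝ) (hα : 0 < α) (hk0 : 0 < k) (hk1 : k < 1)
    {Ω : Type*} [MeasurableSpace Ω] (P : Measure Ω) [IsProbabilityMeasure P]
    (ξ : Ω → ℝ) (Nh : Ω → ℕ) (hξ : Measurable ξ) (hNh : Measurable Nh)
    (hξlaw : Measure.map ξ P = invGaussianMeasure (α / (1 - k)) ((α / k) ^ 2))
    (hcond : ∀ (m : ℕ) (s : Set ℝ), MeasurableSet s →
      P {ω | ξ ω ∈ s ∧ Nh ω = m} =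
        ∫⁻ x in s, ENNReal.ofReal (Real.exp (-x) * x ^ m / (Nat.factorial m))
          ∂(Measure.map ξ P))
    (Λh : Ω → ℝ) (hΛh : ∀ ω, Λh ω = α + k * (Nh ω : ℝ)) :
    (∫ ω, (Nh ω : ℝ) ∂P) = α / (1 - k) ∧
    (∫ ω, Λh ω ∂P) = α / (1 - k) ∧
    (∫ ω, ((Nh ω : ℝ) - Λh ω) ^ 2 ∂P) = (k ^ 2 + (1 - k) ^ 2) * ∫ ω, Λh ω ∂P := by
  have hk : 0 < 1 - k := by linarith
  have : IsProbabilityMeasure (invGaussianMeasure (α / (1 - k)) ((α / k) ^ 2)) :=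
    hξlaw ▸ Measure.isProbabilityMeasure_map hξ.aemeasurable
  have hlaw (n : ℕ) := by simpa [hξlaw] using hcond n univ MeasurableSet.univ
  have hν := (ae_pos_invGaussianMeasure (α / (1 - k)) ((α / k) ^ 2)).mono fun _ hx => hx.le
  obtain ⟨hmean, hsecond⟩ :=
    invGaussianMeasure_moments (div_pos hα hk) (by positivity : 0 < (α / k) ^ 2)
  obtain ⟨hN, hEN⟩ := integral_natCast_of_mixedPoisson hNh hlaw hν (by positivity) hmean
  obtain ⟨hN₂, hEN₂⟩ :=
    integral_natCast_sq_of_mixedPoisson hNh hlaw hν (by positivity) (by positivity) hmean hsecond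
  have hEΛ : ∫ ω, Λh ω ∂P = α / (1 - k) := by
    simp_rw [hΛh]
    rw [integral_add (integrable_const α) (hN.const_mul k), integral_const, integral_const_mul,
      hEN, probReal_univ, one_smul]
    field_simp
    ring
  refine ⟨hEN, hEΛ, ?_⟩
  rw [hEΛ]
  simp_rw [hΛh, show ∀ n : ℝ, n - (α + k * n) = (1 - k) * n + -α from fun n => by ring]
  rw [integral_mul_add_const_sq hN hN₂, hEN, hEN₂]
  field_simp
  ring
end
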